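/- arXiv:1610.08430 — 2 statements merged into one kernel-verified Lean document; each statement's English description precedes it below -/
import Mathlib

section
/- Let R be a noetherian ring of injective dimension at most 2 (on both sides) and let M be a reflexive finitely generated R-module. Then there is an exact sequence 0 → M → R^n → R^m → C → 0 for some n, m and some module C, and consequently Ext_R^i(M,R) ≅ Ext_R^{i+2}(C,R) = 0 for all i ≥ 1. -/
open CategoryTheory

/-- The Ext group `Ext_R^i(M, N)` (as an object of `ModuleCat ℤ`, i.e. an abelian
group), defined via the derived functor `Ext` of the module category. -/
noncomputable def ExtGrp (R : Type) [Ring R] (M N : Type) [AddCommGroup M] [Module R M]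
    [AddCommGroup N] [Module R N] (i : ℕ) : ModuleCat ℤ :=
  ((Ext ℤ (ModuleCat R) i).obj (Opposite.op (ModuleCat.of R M))).obj (ModuleCat.of R N)

/-- `M` is reflexive: the canonical evaluation map `M → M** = Hom_{Rᵒᵖ}(Hom_R(M,R), R)`
is bijective (injectivity and surjectivity spelled out directly). -/
def IsReflexive' (R : Type) [Ring R] (M : Type) [AddCommGroup M] [Module R M] : Prop :=
  (∀ m : M, (∀ f : M →ₗ[R] R, f m = 0) → m = 0) ∧
  (∀ Φ : (M →ₗ[R] R) →ₗ[Rᵐᵒᵖ] R, ∃ m : M, ∀ f : M →ₗ[R] R, Φ f = f m)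

section Aux
variable (R : Type) [Ring R]

variable (R : Type) [Ring R]

lemma single_eq_ite {k : ℕ} (j : Fin k) :
    (Pi.single j (1:R)) = (fun i => if j = i then (1:R) else 0) := by
  ext i; simp [Pi.single_apply, eq_comm]

theorem dual_noetherian [IsNoetherianRing Rᵐᵒᵖ]
    (M : Type) [AddCommGroup M] [Module R M] [Module.Finite R M] :
    IsNoetherian Rᵐᵒᵖ (M →ₗ[R] R) := by
  obtain ⟨k, π, hπ⟩ := Module.Finite.exists_fin' R M
  let D : (M →ₗ[R] R) →ₗ[Rᵐᵒᵖ] (Fin k → Rᵐᵒᵖ) :=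
    { toFun := fun ψ j => MulOpposite.op (ψ (π (Pi.single j 1)))
      map_add' := by intro ψ φ; ext j; simp
      map_smul' := by
        intro c ψ; ext j
        simp [MulOpposite.op_mul] }
  have hD : Function.Injective D := by
    intro ψ φ hψφ
    have h1 : ∀ j, ψ (π (Pi.single j 1)) = φ (π (Pi.single j 1)) := by
      intro j
      have := congrFun hψφ j
      simpa [D] using this
    ext x
    obtain ⟨v, rfl⟩ := hπ x
    rw [pi_eq_sum_univ v]
    simp only [map_sum, map_smul]
    exact Finset.sum_congr rfl fun j _ => by rw [← single_eq_ite, h1]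
  exact isNoetherian_of_injective D hD

theorem partA [IsNoetherianRing R] [IsNoetherianRing Rᵐᵒᵖ]
    (M : Type) [AddCommGroup M] [Module R M] [Module.Finite R M]
    (hrefl : IsReflexive' R M) :
    ∃ (n m : ℕ) (f : M →ₗ[R] (Fin n → R)) (g : (Fin n → R) →ₗ[R] (Fin m → R)),
      Function.Injective f ∧ Function.Exact f g := by
  have hN := dual_noetherian R M
  have hfin : Module.Finite Rᵐᵒᵖ (M →ₗ[R] R) := ⟨IsNoetherian.noetherian ⊤⟩
  obtain ⟨n, p, hp⟩ := Module.Finite.exists_fin' Rᵐᵒᵖ (M →ₗ[R] R)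
  have hkerfin : Module.Finite Rᵐᵒᵖ (LinearMap.ker p) :=
    ⟨IsNoetherian.noetherian ⊤⟩
  obtain ⟨m, q₀, hq₀⟩ := Module.Finite.exists_fin' Rᵐᵒᵖ (LinearMap.ker p)
  set q : (Fin m → Rᵐᵒᵖ) →ₗ[Rᵐᵒᵖ] (Fin n → Rᵐᵒᵖ) := (LinearMap.ker p).subtype ∘ₗ q₀ with hq
  have hrange : LinearMap.range q = LinearMap.ker p := by
    rw [hq, LinearMap.range_comp, LinearMap.range_eq_top.2 hq₀, Submodule.map_top,
      Submodule.range_subtype]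
  -- the expansion lemma
  have expand : ∀ {N : Type} [AddCommGroup N] [Module Rᵐᵒᵖ N] {ℓ : ℕ}
      (p : (Fin ℓ → Rᵐᵒᵖ) →ₗ[Rᵐᵒᵖ] N) (u : Fin ℓ → Rᵐᵒᵖ),
      p u = ∑ j, u j • p (Pi.single j 1) := by
    intro N _ _ ℓ p u
    conv_lhs => rw [pi_eq_sum_univ u]
    rw [map_sum]
    exact Finset.sum_congr rfl fun j _ => by rw [← single_eq_ite, map_smul]
  -- the maps
  refine ⟨n, m, ?_, ?_, ?_, ?_⟩
  · exact
    { toFun := fun x j => p (Pi.single j 1) x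
      map_add' := by intro x y; ext j; simp
      map_smul' := by intro r x; ext j; simp }
  · exact
    { toFun := fun w k => ∑ j, w j * (q (Pi.single k 1) j).unop
      map_add' := by
        intro w w'; ext k
        simp [add_mul, Finset.sum_add_distrib]
      map_smul' := by
        intro r w; ext k
        simp [mul_assoc, Finset.mul_sum] }
  · -- injectivity
    intro x y hxy
    have h0 : ∀ j : Fin n, p (Pi.single j 1) (x - y) = 0 := by
      intro j
      have := congrFun hxy j
      simp only [LinearMap.coe_mk, AddHom.coe_mk] at this
      simp [this, map_sub]
    have : ∀ ψ : M →ₗ[R] R, ψ (x - y) = 0 := by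
      intro ψ
      obtain ⟨u, rfl⟩ := hp ψ
      rw [expand p u, LinearMap.sum_apply]
      refine Finset.sum_eq_zero fun j _ => ?_
      rw [LinearMap.smul_apply, h0 j, smul_zero]
    have := hrefl.1 _ this
    exact sub_eq_zero.1 this
  · -- exactness
    intro w
    constructor
    · -- g w = 0 → ∃ x, f x = w
      intro hw
      -- Φ₀
      set Φ₀ : (Fin n → Rᵐᵒᵖ) →ₗ[Rᵐᵒᵖ] R :=
        { toFun := fun u => ∑ j, w j * (u j).unop
          map_add' := by
            intro u u'; simp [mul_add, Finset.sum_add_distrib]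
          map_smul' := by
            intro c u
            simp only [Pi.smul_apply, smul_eq_mul, MulOpposite.unop_mul, RingHom.id_apply]
            rw [MulOpposite.smul_eq_mul_unop]
            rw [Finset.sum_mul]
            exact Finset.sum_congr rfl fun j _ => by rw [mul_assoc]
        } with hΦ₀
      have hle : LinearMap.ker p ≤ LinearMap.ker Φ₀ := by
        intro u hu
        rw [← hrange] at hu
        obtain ⟨v, rfl⟩ := hu
        have hqv : ∀ j, (q v j).unop = ∑ k, (q (Pi.single k 1) j).unop * (v k).unop := by
          intro j
          rw [expand q v]
          simp only [Finset.sum_apply, Pi.smul_apply]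
          rw [Finset.unop_sum]
          exact Finset.sum_congr rfl fun k _ => by
            rw [smul_eq_mul, MulOpposite.unop_mul]
        simp only [LinearMap.mem_ker, hΦ₀, LinearMap.coe_mk, AddHom.coe_mk]
        calc ∑ j, w j * (q v j).unop
            = ∑ j, ∑ k, w j * ((q (Pi.single k 1) j).unop * (v k).unop) := by
              refine Finset.sum_congr rfl fun j _ => ?_
              rw [hqv j, Finset.mul_sum]
          _ = ∑ k, (∑ j, w j * (q (Pi.single k 1) j).unop) * (v k).unop := by
              rw [Finset.sum_comm]
              refine Finset.sum_congr rfl fun k _ => ?_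
              rw [Finset.sum_mul]
              exact Finset.sum_congr rfl fun j _ => by rw [mul_assoc]
          _ = 0 := by
              refine Finset.sum_eq_zero fun k _ => ?_
              have : ∑ j, w j * (q (Pi.single k 1) j).unop = 0 := congrFun hw k
              rw [this, zero_mul]
      set e := p.quotKerEquivOfSurjective hp with he
      set Φ : (M →ₗ[R] R) →ₗ[Rᵐᵒᵖ] R :=
        ((LinearMap.ker p).liftQ Φ₀ hle) ∘ₗ (e.symm : (M →ₗ[R] R) →ₗ[Rᵐᵒᵖ] _) with hΦ
      have hΦp : ∀ u, Φ (p u) = Φ₀ u := by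
        intro u
        have h1 : e.symm (p u) = Submodule.Quotient.mk u := by
          apply e.injective
          simp only [LinearEquiv.apply_symm_apply]
          rfl
        rw [hΦ]
        simp only [LinearMap.coe_comp, LinearEquiv.coe_coe, Function.comp_apply, h1]
        rfl
      obtain ⟨x, hx⟩ := hrefl.2 Φ
      refine ⟨x, ?_⟩
      ext j
      simp only [LinearMap.coe_mk, AddHom.coe_mk]
      have := (hx (p (Pi.single j 1))).symm
      rw [this, hΦp]
      simp only [hΦ₀, LinearMap.coe_mk, AddHom.coe_mk]
      rw [Finset.sum_eq_single j]
      · simp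
      · intro b _ hb
        simp [Pi.single_apply, hb]
      · intro h; exact absurd (Finset.mem_univ j) h
    · -- ∃ x, f x = w → g w = 0
      rintro ⟨x, rfl⟩
      ext k
      simp only [LinearMap.coe_mk, AddHom.coe_mk]
      have hqk : q (Pi.single k 1) ∈ LinearMap.ker p := by
        rw [← hrange]; exact ⟨_, rfl⟩
      have h0 : p (q (Pi.single k 1)) = 0 := hqk
      have := expand p (q (Pi.single k 1))
      rw [h0] at this
      have h2 := congrArg (fun ψ : M →ₗ[R] R => ψ x) this.symm
      simp only [LinearMap.zero_apply, LinearMap.sum_apply, LinearMap.smul_apply] at h2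
      have h3 : ∑ j, (p (Pi.single j 1)) x * (q (Pi.single k 1) j).unop = 0 := by
        rw [← h2]; exact Finset.sum_congr rfl fun j _ => rfl
      simpa using h3



theorem partB (R : Type) [Ring R] {n m : ℕ} {M C : Type}
    [AddCommGroup M] [Module R M] [AddCommGroup C] [Module R C]
    (f : M →ₗ[R] (Fin n → R)) (g : (Fin n → R) →ₗ[R] (Fin m → R)) (h : (Fin m → R) →ₗ[R] C)
    (hf : Function.Injective f) (hfg : Function.Exact f g) (hgh : Function.Exact g h)
    (hh : Function.Surjective h) (i : ℕ) :
    Nonempty (ExtGrp R M R (i+1) ≅ ExtGrp R C R (i+3)) := by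
  classical
  let MM := ModuleCat.of R M
  let CC := ModuleCat.of R C
  let RR := ModuleCat.of R R
  let Q : ProjectiveResolution MM := ProjectiveResolution.of MM
  -- the spliced complex
  let Xobj : ℕ → ModuleCat R := fun k => match k with
    | 0 => ModuleCat.of R (Fin m → R)
    | 1 => ModuleCat.of R (Fin n → R)
    | (k+2) => Q.complex.X k
  let Xd : ∀ k, Xobj (k+1) ⟶ Xobj k := fun k => match k with
    | 0 => ModuleCat.ofHom g
    | 1 => Q.π.f 0 ≫ ModuleCat.ofHom f
    | (k+2) => Q.complex.d (k+1) k
  have hfg0 : ModuleCat.ofHom f ≫ ModuleCat.ofHom g = 0 := by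
    exact ModuleCat.hom_ext (LinearMap.ext fun x => hfg.apply_apply_eq_zero x)
  have Xsq : ∀ k, Xd (k+1) ≫ Xd k = 0 := by
    intro k
    match k with
    | 0 => show (Q.π.f 0 ≫ ModuleCat.ofHom f) ≫ ModuleCat.ofHom g = 0
           exact (Category.assoc _ _ _).trans ((congrArg (Q.π.f 0 ≫ ·) hfg0).trans Limits.comp_zero)
    | 1 => show Q.complex.d 1 0 ≫ (Q.π.f 0 ≫ ModuleCat.ofHom f) = 0
           exact (Category.assoc _ _ _).symm.trans ((congrArg (· ≫ ModuleCat.ofHom f) Q.complex_d_comp_π_f_zero).trans Limits.zero_comp)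
    | (k+2) => exact Q.complex.d_comp_d _ _ _
  let X : ChainComplex (ModuleCat R) ℕ := ChainComplex.of Xobj Xd Xsq
  have hXd : ∀ k, X.d (k+1) k = Xd k := fun k => ChainComplex.of_d _ _ _
  have hgh0 : X.d 1 0 ≫ ModuleCat.ofHom h = 0 := by
    rw [hXd 0]
    show ModuleCat.ofHom g ≫ ModuleCat.ofHom h = 0
    exact ModuleCat.hom_ext (LinearMap.ext fun x => hgh.apply_apply_eq_zero x)
  let π : X ⟶ (ChainComplex.single₀ (ModuleCat R)).obj CC :=
    (ChainComplex.toSingle₀Equiv X CC).symm ⟨ModuleCat.ofHom h, hgh0⟩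
  have hπ0 : π.f 0 = ModuleCat.ofHom h := ChainComplex.toSingle₀Equiv_symm_apply_f_zero _ _
  have hQπ0 : Function.Surjective (Q.π.f 0) := by
    rw [← ModuleCat.epi_iff_surjective]
    infer_instance
  -- projectivity
  have hproj : ∀ k, Projective (X.X k) := by
    intro k
    match k with
    | 0 => exact ModuleCat.projective_of_free (Pi.basisFun R (Fin m))
    | 1 => exact ModuleCat.projective_of_free (Pi.basisFun R (Fin n))
    | (k+2) => show Projective (Q.complex.X k); infer_instance
  -- exactness in positive degrees
  have hexact : ∀ k, X.ExactAt (k+1) := by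
    intro k
    match k with
    | 0 =>
      rw [X.exactAt_iff' 2 1 0 (by simp) (by simp), ShortComplex.moduleCat_exact_iff]
      intro x hx
      have hx2 : (X.d 1 0) x = 0 := hx
      rw [hXd 0] at hx2
      obtain ⟨y, hy⟩ := (hfg x).1 hx2
      obtain ⟨z, hz⟩ := hQπ0 y
      refine ⟨z, ?_⟩
      show (X.d 2 1) z = x
      rw [hXd 1]
      show ModuleCat.ofHom f (Q.π.f 0 z) = x
      rw [hz]
      exact hy
    | 1 =>
      rw [X.exactAt_iff' 3 2 1 (by simp) (by simp), ShortComplex.moduleCat_exact_iff]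
      intro x hx
      have hx2 : (X.d 2 1) x = 0 := hx
      rw [hXd 1] at hx2
      have hx' : Q.π.f 0 x = 0 := by
        apply hf
        refine Eq.trans ?_ (map_zero f).symm
        exact hx2
      have := Q.exact₀
      rw [ShortComplex.moduleCat_exact_iff] at this
      obtain ⟨y, hy⟩ := this x hx'
      refine ⟨y, ?_⟩
      show (X.d 3 2) y = x
      rw [hXd 2]
      exact hy
    | (k+2) =>
      rw [X.exactAt_iff' (k+4) (k+3) (k+2) (by simp) (by simp),
        ShortComplex.moduleCat_exact_iff]
      intro x hx
      have hx2 : (X.d (k+3) (k+2)) x = 0 := hx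
      rw [hXd (k+2)] at hx2
      have := Q.exact_succ k
      rw [ShortComplex.moduleCat_exact_iff] at this
      obtain ⟨y, hy⟩ := this x hx2
      refine ⟨y, ?_⟩
      show (X.d (k+4) (k+3)) y = x
      rw [hXd (k+3)]
      exact hy
  -- the resolution
  let res : ProjectiveResolution CC :=
    { complex := X
      projective := hproj
      π := π
      quasiIso := ⟨fun k => by
        cases k with
        | zero =>
          rw [ChainComplex.quasiIsoAt₀_iff, ShortComplex.quasiIso_iff_of_zeros']
          · constructor
            · rw [ShortComplex.moduleCat_exact_iff]
              intro x hx
              have hx' : h x = 0 := by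
                have : π.f 0 x = 0 := hx
                rw [hπ0] at this
                exact this
              obtain ⟨y, hy⟩ := (hgh x).1 hx'
              refine ⟨y, ?_⟩
              show (X.d 1 0) y = x
              rw [hXd 0]
              exact hy
            · show Epi (π.f 0)
              rw [ModuleCat.epi_iff_surjective]
              exact fun y => ⟨_, (congrFun (congrArg (fun φ : X.X 0 ⟶ ((ChainComplex.single₀ (ModuleCat R)).obj CC).X 0 => ⇑(ConcreteCategory.hom φ)) hπ0) _).trans (hh y).choose_spec⟩
          all_goals rfl
        | succ k =>
          rw [quasiIsoAt_iff_exactAt' π (k+1) (ChainComplex.exactAt_succ_single_obj _ _)]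
          exact hexact k⟩ }
  -- homology comparison
  let Y := X.linearYonedaObj ℤ RR
  let Zc := Q.complex.linearYonedaObj ℤ RR
  have e1 : Zc.sc (i+1) ≅ Zc.sc' i (i+1) (i+2) := Zc.isoSc' i (i+1) (i+2) (by simp) (by simp)
  have e2 : Y.sc (i+3) ≅ Y.sc' (i+2) (i+3) (i+4) := Y.isoSc' (i+2) (i+3) (i+4) (by simp) (by simp)
  have e3 : Zc.sc' i (i+1) (i+2) ≅ Y.sc' (i+2) (i+3) (i+4) := by
    refine ShortComplex.isoMk (Iso.refl _) (Iso.refl _) (Iso.refl _) ?_ ?_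
    · show 𝟙 _ ≫ _ = _ ≫ 𝟙 _
      refine (Category.id_comp _).trans (Eq.trans ?_ (Category.comp_id _).symm)
      show Y.d (i+2) (i+3) = Zc.d i (i+1)
      simp only [Y, Zc, ChainComplex.linearYonedaObj_d, hXd (i+2)]
      rfl
    · show 𝟙 _ ≫ _ = _ ≫ 𝟙 _
      refine (Category.id_comp _).trans (Eq.trans ?_ (Category.comp_id _).symm)
      show Y.d (i+3) (i+4) = Zc.d (i+1) (i+2)
      simp only [Y, Zc, ChainComplex.linearYonedaObj_d, hXd (i+3)]
      rfl
  have e4 : Zc.homology (i+1) ≅ Y.homology (i+3) :=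
    ShortComplex.homologyMapIso (e1 ≪≫ e3 ≪≫ e2.symm)
  exact ⟨(Q.isoExt (i+1) RR : ExtGrp R M R (i+1) ≅ _) ≪≫ e4 ≪≫
    (res.isoExt (i+3) RR : ExtGrp R C R (i+3) ≅ _).symm⟩


end Aux

/-- Let `R` be a (left and right) noetherian ring of injective
dimension at most `2` on both sides, and let `M` be a reflexive finitely generated
`R`-module. Then there is an exact sequence `0 → M → R^n → R^m → C → 0` for some
`n`, `m` and some module `C`, and consequently
`Ext_R^i(M, R) ≅ Ext_R^{i+2}(C, R) = 0` for all `i ≥ 1`. -/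
theorem exists_exact_sequence_and_ext_vanishing_of_reflexive
    (R : Type) [Ring R] [IsNoetherianRing R] [IsNoetherianRing Rᵐᵒᵖ]
    (hidimL : ∀ (N : ModuleCat R) (i : ℕ), 3 ≤ i →
      Limits.IsZero (((Ext ℤ (ModuleCat R) i).obj
        (Opposite.op N)).obj (ModuleCat.of R R)))
    (hidimR : ∀ (N : ModuleCat Rᵐᵒᵖ) (i : ℕ), 3 ≤ i →
      Limits.IsZero (((Ext ℤ (ModuleCat Rᵐᵒᵖ) i).obj
        (Opposite.op N)).obj (ModuleCat.of Rᵐᵒᵖ Rᵐᵒᵖ)))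
    (M : Type) [AddCommGroup M] [Module R M] [Module.Finite R M]
    (hrefl : IsReflexive' R M) :
    ∃ (n m : ℕ) (C : Type) (_ : AddCommGroup C) (_ : Module R C)
      (f : M →ₗ[R] (Fin n → R)) (g : (Fin n → R) →ₗ[R] (Fin m → R))
      (h : (Fin m → R) →ₗ[R] C),
        Function.Injective f ∧ Function.Exact f g ∧ Function.Exact g h ∧
        Function.Surjective h ∧
        ∀ i : ℕ, 1 ≤ i →
          Nonempty (ExtGrp R M R i ≅ ExtGrp R C R (i + 2)) ∧
          Limits.IsZero (ExtGrp R C R (i + 2)) ∧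
          Limits.IsZero (ExtGrp R M R i) := by
  obtain ⟨n, m, f, g, hf, hfg⟩ := partA R M hrefl
  let C : Type := (Fin m → R) ⧸ LinearMap.range g
  let h : (Fin m → R) →ₗ[R] C := (LinearMap.range g).mkQ
  have hgh : Function.Exact g h := by
    intro y
    constructor
    · intro hy
      exact (Submodule.Quotient.mk_eq_zero _).1 hy
    · rintro ⟨x, rfl⟩
      exact (Submodule.Quotient.mk_eq_zero _).2 ⟨x, rfl⟩
  have hh : Function.Surjective h := Submodule.mkQ_surjective _
  refine ⟨n, m, C, inferInstance, inferInstance, f, g, h, hf, hfg, hgh, hh, ?_⟩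
  intro i hi
  obtain ⟨j, rfl⟩ : ∃ j, i = j + 1 := ⟨i - 1, by omega⟩
  obtain ⟨e⟩ := partB R f g h hf hfg hgh hh j
  have hzero : Limits.IsZero (ExtGrp R C R (j + 1 + 2)) :=
    hidimL (ModuleCat.of R C) (j + 1 + 2) (by omega)
  have e' : ExtGrp R M R (j + 1) ≅ ExtGrp R C R (j + 1 + 2) := e
  exact ⟨⟨e'⟩, hzero, hzero.of_iso e'⟩
end

section
/- Let S be a filtered ring and M₁ →^φ M₂ →^ψ M₃ a complex of filtered S-modules and filtered homomorphisms (ψ ∘ φ = 0). If the associated graded sequence gr M₁ → gr M₂ → gr M₃ is exact, then the original sequence is exact, i.e. im φ = ker ψ. -/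
/-- Let `S` be a filtered ring (exhaustive, non-negative increasing
filtration `F`) and `M₁ →^φ M₂ →^ψ M₃` a complex of filtered `S`-modules (with
exhaustive non-negative filtrations `G₁`, `G₂`, `G₃`) and filtered homomorphisms.
If the associated graded sequence `gr M₁ → gr M₂ → gr M₃` is exact (expressed
degreewise: every class of `Gᵢ₂ n / G₂ (n-1)` killed by `gr ψ` is in the image of
`gr φ`), then the original sequence is exact: `im φ = ker ψ`. -/
theorem exact_of_gr_exact
    {S : Type} [Ring S] (F : ℤ → AddSubgroup S)
    {M₁ M₂ M₃ : Type} [AddCommGroup M₁] [Module S M₁]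
    [AddCommGroup M₂] [Module S M₂] [AddCommGroup M₃] [Module S M₃]
    (G₁ : ℤ → AddSubgroup M₁) (G₂ : ℤ → AddSubgroup M₂) (G₃ : ℤ → AddSubgroup M₃)
    -- `F` is a non-negative exhaustive ring filtration
    (hFmono : Monotone F) (hFone : (1 : S) ∈ F 0)
    (hFmul : ∀ i j : ℤ, ∀ s ∈ F i, ∀ t ∈ F j, s * t ∈ F (i + j))
    (hFexh : ∀ s : S, ∃ n : ℤ, s ∈ F n)
    (hFneg : ∀ n : ℤ, n < 0 → F n = ⊥)
    -- the `Gᵢ` are non-negative exhaustive module filtrations compatible with `F`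
    (hG₁mono : Monotone G₁) (hG₂mono : Monotone G₂) (hG₃mono : Monotone G₃)
    (hG₁smul : ∀ i j : ℤ, ∀ s ∈ F i, ∀ x ∈ G₁ j, s • x ∈ G₁ (i + j))
    (hG₂smul : ∀ i j : ℤ, ∀ s ∈ F i, ∀ x ∈ G₂ j, s • x ∈ G₂ (i + j))
    (hG₃smul : ∀ i j : ℤ, ∀ s ∈ F i, ∀ x ∈ G₃ j, s • x ∈ G₃ (i + j))
    (hG₁exh : ∀ x : M₁, ∃ n : ℤ, x ∈ G₁ n) (hG₂exh : ∀ x : M₂, ∃ n : ℤ, x ∈ G₂ n)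
    (hG₃exh : ∀ x : M₃, ∃ n : ℤ, x ∈ G₃ n)
    (hG₁neg : ∀ n : ℤ, n < 0 → G₁ n = ⊥) (hG₂neg : ∀ n : ℤ, n < 0 → G₂ n = ⊥)
    (hG₃neg : ∀ n : ℤ, n < 0 → G₃ n = ⊥)
    -- `φ` and `ψ` are filtered homomorphisms
    (φ : M₁ →ₗ[S] M₂) (ψ : M₂ →ₗ[S] M₃)
    (hφfil : ∀ n : ℤ, ∀ x ∈ G₁ n, φ x ∈ G₂ n)
    (hψfil : ∀ n : ℤ, ∀ x ∈ G₂ n, ψ x ∈ G₃ n)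
    -- the sequence is a complex
    (hcomplex : ψ.comp φ = 0)
    -- the associated graded sequence is exact
    (hgr : ∀ n : ℤ, ∀ x ∈ G₂ n, ψ x ∈ G₃ (n - 1) →
      ∃ y ∈ G₁ n, x - φ y ∈ G₂ (n - 1)) :
    LinearMap.range φ = LinearMap.ker ψ := by
  have key : ∀ k : ℕ, ∀ x ∈ G₂ (k : ℤ), ψ x = 0 → x ∈ LinearMap.range φ := by
    intro k
    induction k with
    | zero =>
      intro x hx hψ
      obtain ⟨y, hy, hxy⟩ := hgr 0 x hx (by rw [hψ]; exact (G₃ (0-1)).zero_mem)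
      rw [hG₂neg (0 - 1) (by norm_num)] at hxy
      exact ⟨y, (sub_eq_zero.mp ((AddSubgroup.mem_bot).mp hxy)).symm⟩
    | succ k ih =>
      intro x hx hψ
      have hx' : x ∈ G₂ ((k : ℤ) + 1) := by push_cast at hx; exact hx
      obtain ⟨y, hy, hxy⟩ := hgr ((k : ℤ) + 1) x hx' (by rw [hψ]; exact (G₃ _).zero_mem)
      have h1 : ((k : ℤ) + 1 - 1) = (k : ℤ) := by ring
      rw [h1] at hxy
      have hψ2 : ψ (x - φ y) = 0 := by
        have : ψ (φ y) = 0 := by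
          have := LinearMap.congr_fun hcomplex y
          simpa using this
        simp [map_sub, hψ, this]
      obtain ⟨z, hz⟩ := ih (x - φ y) hxy hψ2
      exact ⟨z + y, by rw [map_add, hz]; abel⟩
  ext x
  simp only [LinearMap.mem_range, LinearMap.mem_ker]
  constructor
  · rintro ⟨y, rfl⟩
    have := LinearMap.congr_fun hcomplex y
    simpa using this
  · intro hψ
    obtain ⟨n, hn⟩ := hG₂exh x
    rcases le_or_gt 0 n with h | h
    · obtain ⟨k, rfl⟩ := Int.eq_ofNat_of_zero_le h
      exact key k x hn hψ
    · rw [hG₂neg n h, AddSubgroup.mem_bot] at hn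
      exact ⟨0, by simp [hn]⟩
end
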